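/- arXiv:1412.6493 — 2 statements merged into one kernel-verified Lean document; each statement's English description precedes it below -/
import Mathlib

section
/- Let ρ : ℝ^d → ℝ be a nonnegative integrable function (a spectral density) with ρ(−ω) = ρ(ω) for all ω, and define the translation-invariant kernel k(τ) = ∫_{ℝ^d} ρ(ω) cos⟨ω, τ⟩ dω. Then for every ε > 0 there exist Q ∈ ℕ, weights v_1², …, v_Q² ≥ 0, mean vectors μ_1, …, μ_Q ∈ ℝ^d, and positive reals σ_{q,1}², …, σ_{q,d}² (diagonal covariances Σ_q) such that the Gaussian spectral mixture kernel k_GM(τ) = Σ_{q=1}^Q v_q² exp(−(1/2) Σ_{i=1}^d σ_{q,i}² τ_i²) cos⟨τ, μ_q⟩ satisfies sup_{τ ∈ ℝ^d} |k(τ) − k_GM(τ)| < ε. -/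
/-!
Discretizing the spectral measure `ρ ω dω` into finitely many point masses `w_j δ_{p_j}` turns `k`
into a cosine sum `S τ = ∑ j, w_j cos ⟪p_j, τ⟫`, with an error `η + c ‖τ‖` that grows only linearly
in `τ` and whose constants can both be made small. Multiplying `S` by a wide Gaussian envelope
`exp (-σ² ‖τ‖² / 2)` gives a Gaussian spectral mixture: for `‖τ‖ ≤ T` the envelope is close to `1`,
while for `‖τ‖ ≥ T` both `k τ` (by Riemann–Lebesgue) and the damped error are small, since
`‖τ‖ exp (-σ² ‖τ‖² / 2) ≤ 1 / σ`.
-/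

open MeasureTheory Filter Metric Function
open scoped RealInnerProductSpace Topology Real

theorem tendsto_integral_mul_cos_inner_cocompact {V : Type*} [NormedAddCommGroup V]
    [InnerProductSpace ℝ V] [FiniteDimensional ℝ V] [MeasurableSpace V] [BorelSpace V]
    {ρ : V → ℝ} (hρ : Integrable ρ) :
    Tendsto (fun τ => ∫ ω, ρ ω * Real.cos ⟪ω, τ⟫) (cocompact V) (𝓝 0) := by
  have hscale : Tendsto (fun τ : V => (2 * π)⁻¹ • τ) (cocompact V) (cocompact V) :=
    (Homeomorph.smulOfNeZero _ (by positivity)).toCocompactMap.cocompact_tendsto'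
  have hRL := (Complex.continuous_re.tendsto 0).comp
    ((tendsto_integral_exp_inner_smul_cocompact fun ω => (ρ ω : ℂ)).comp hscale)
  rw [Complex.zero_re] at hRL
  refine hRL.congr fun τ => ?_
  simp only [comp_apply]
  rw [← RCLike.re_eq_complex_re,
    ← integral_re ((Real.fourierIntegral_convergent_iff _).2 hρ.ofReal)]
  congr 1 with ω
  rw [Circle.smul_def, Real.fourierChar_apply, real_inner_smul_right, smul_eq_mul,
    RCLike.re_eq_complex_re, Complex.re_mul_ofReal,
    show 2 * π * -((2 * π)⁻¹ * ⟪ω, τ⟫) = -⟪ω, τ⟫ by field_simp,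
    Complex.exp_ofReal_mul_I_re, Real.cos_neg, mul_comm]

lemma mul_exp_neg_sq_div_two_le_one (s : ℝ) : s * Real.exp (-(s ^ 2 / 2)) ≤ 1 := by
  rw [Real.exp_neg, ← div_eq_mul_inv, div_le_one (Real.exp_pos _)]
  nlinarith [Real.add_one_le_exp (s ^ 2 / 2), sq_nonneg (s - 1)]

section GaussianEnvelope

variable {k S M η c σ r : ℝ}

lemma abs_sub_exp_mul_le_add_sq_mul (hS : |S| ≤ M) (hkS : |k - S| ≤ η + c * r) :
    |k - Real.exp (-(1 / 2) * (σ ^ 2 * r ^ 2)) * S| ≤ η + c * r + σ ^ 2 * r ^ 2 / 2 * M := by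
  set G := Real.exp (-(1 / 2) * (σ ^ 2 * r ^ 2))
  have hG₁ : G ≤ 1 := Real.exp_le_one_iff.2 (by nlinarith [sq_nonneg σ, sq_nonneg r])
  have hG₂ : 1 - G ≤ σ ^ 2 * r ^ 2 / 2 := by
    have := Real.one_sub_le_exp_neg (σ ^ 2 * r ^ 2 / 2)
    rw [show -(σ ^ 2 * r ^ 2 / 2) = -(1 / 2) * (σ ^ 2 * r ^ 2) by ring] at this
    linarith
  calc |k - G * S| ≤ |k - S| + |S - G * S| := abs_sub_le _ _ _
    _ = |k - S| + (1 - G) * |S| := by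
      rw [← one_sub_mul, abs_mul, abs_of_nonneg (sub_nonneg.2 hG₁)]
    _ ≤ η + c * r + σ ^ 2 * r ^ 2 / 2 * M := by gcongr

lemma abs_sub_exp_mul_le_abs_add (hσ : 0 < σ) (hη : 0 ≤ η) (hc : 0 ≤ c)
    (hkS : |k - S| ≤ η + c * r) :
    |k - Real.exp (-(1 / 2) * (σ ^ 2 * r ^ 2)) * S| ≤ |k| + η + c / σ := by
  set G := Real.exp (-(1 / 2) * (σ ^ 2 * r ^ 2))
  have hG₀ : 0 < G := Real.exp_pos _
  have hG₁ : G ≤ 1 := Real.exp_le_one_iff.2 (by nlinarith [sq_nonneg σ, sq_nonneg r])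
  have hrG : r * G ≤ 1 / σ := by
    have := mul_exp_neg_sq_div_two_le_one (σ * r)
    rw [show -((σ * r) ^ 2 / 2) = -(1 / 2) * (σ ^ 2 * r ^ 2) by ring] at this
    rw [le_div_iff₀ hσ]
    linarith
  calc |k - G * S| = |(1 - G) * k + G * (k - S)| := by ring_nf
    _ ≤ (1 - G) * |k| + G * (η + c * r) := by
      grw [abs_add_le, abs_mul, abs_mul, abs_of_nonneg (sub_nonneg.2 hG₁), abs_of_pos hG₀, hkS]
    _ = (1 - G) * |k| + G * η + c * (r * G) := by ring
    _ ≤ |k| + η + c / σ := by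
      grw [hrG, mul_one_div]
      nlinarith [abs_nonneg k]

end GaussianEnvelope

theorem exists_abs_sub_exp_mul_lt {V : Type*} [SeminormedAddCommGroup V] {k : V → ℝ}
    (hk : Tendsto k (Bornology.cobounded V) (𝓝 0)) {𝒮 : Set (V → ℝ)} {M : ℝ}
    (h𝒮 : ∀ S ∈ 𝒮, ∀ τ, |S τ| ≤ M)
    (happrox : ∀ η > 0, ∀ c > 0, ∃ S ∈ 𝒮, ∀ τ, |k τ - S τ| ≤ η + c * ‖τ‖)
    {ε : ℝ} (hε : 0 < ε) :
    ∃ σ > 0, ∃ S ∈ 𝒮, ∀ τ, |k τ - Real.exp (-(1 / 2) * (σ ^ 2 * ‖τ‖ ^ 2)) * S τ| < ε := by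
  obtain ⟨T, hT⟩ : ∃ T, ∀ τ, T ≤ ‖τ‖ → |k τ| < ε / 2 := by
    simpa using
      (hasBasis_cobounded_norm.tendsto_iff nhds_basis_ball).1 hk (ε / 2) (by positivity)
  -- `σ` keeps the loss `(1 - exp (-σ² ‖τ‖² / 2)) |S τ|` below `ε / 4` on `‖τ‖ ≤ T`; `c` is then
  -- chosen so that both `c T` and `c / σ` (the damped linear error beyond `T`) are below `ε / 8`.
  set σ := √(ε / (2 * (|M| * T ^ 2 + 1)))
  have hσ : 0 < σ := by positivity
  have hσT : σ ^ 2 * (|M| * T ^ 2) ≤ ε / 2 := by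
    have : σ ^ 2 * (|M| * T ^ 2 + 1) = ε / 2 := by
      rw [Real.sq_sqrt (by positivity)]; field_simp
    nlinarith
  set c := ε / (8 * (|T| + σ⁻¹))
  have hc : 0 < c := by positivity
  have hcT : c * |T| + c / σ = ε / 8 := by
    simp only [c]; field_simp
  obtain ⟨S, hS, hkS⟩ := happrox (ε / 8) (by positivity) c hc
  refine ⟨σ, hσ, S, hS, fun τ => ?_⟩
  rcases le_or_gt T ‖τ‖ with hfar | hnear
  · have hbound := abs_sub_exp_mul_le_abs_add hσ (by positivity) hc.le (hkS τ)
    have hkτ := hT τ hfar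
    have : 0 ≤ c * |T| := by positivity
    linarith
  · have hbound := abs_sub_exp_mul_le_add_sq_mul (σ := σ) (h𝒮 S hS τ) (hkS τ)
    have hr : ‖τ‖ ≤ |T| := hnear.le.trans (le_abs_self T)
    have hquad : σ ^ 2 * ‖τ‖ ^ 2 / 2 * M ≤ σ ^ 2 * (|M| * T ^ 2) / 2 :=
      calc σ ^ 2 * ‖τ‖ ^ 2 / 2 * M ≤ σ ^ 2 * ‖τ‖ ^ 2 / 2 * |M| := by
            gcongr; exact le_abs_self M
        _ ≤ σ ^ 2 * |T| ^ 2 / 2 * |M| := by gcongr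
        _ = σ ^ 2 * (|M| * T ^ 2) / 2 := by rw [sq_abs]; ring
    have hlin : c * ‖τ‖ ≤ c * |T| := by gcongr
    have : 0 ≤ c / σ := by positivity
    linarith

theorem exists_setIntegral_compl_closedBall_lt {X : Type*} [PseudoMetricSpace X]
    [MeasurableSpace X] [OpensMeasurableSpace X] {μ : Measure X} {f : X → ℝ}
    (hf : Integrable f μ) (x : X) {ε : ℝ} (hε : 0 < ε) :
    ∃ R, ∫ y in (closedBall x R)ᶜ, f y ∂μ < ε := by
  have hlim := tendsto_setIntegral_of_antitone (μ := μ) (f := f)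
    (s := fun n : ℕ => (closedBall x n)ᶜ) (fun _ => measurableSet_closedBall.compl)
    (fun _ _ hmn => Set.compl_subset_compl.2 <|
      closedBall_subset_closedBall (by exact_mod_cast hmn))
    ⟨0, hf.integrableOn⟩
  rw [← Set.compl_iUnion, iUnion_closedBall_nat, Set.compl_univ, setIntegral_empty] at hlim
  obtain ⟨n, hn⟩ := (hlim.eventually (gt_mem_nhds hε)).exists
  exact ⟨n, hn⟩

theorem IsCompact.exists_disjoint_measurable_cover_subset_ball {X : Type*}
    [PseudoMetricSpace X] [MeasurableSpace X] [OpensMeasurableSpace X] {K : Set X}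
    (hK : IsCompact K) {δ : ℝ} (hδ : 0 < δ) :
    ∃ (n : ℕ) (p : Fin n → X) (C : Fin n → Set X), (∀ i, MeasurableSet (C i)) ∧
      Pairwise (Disjoint on C) ∧ (∀ i, C i ⊆ ball (p i) δ) ∧ K ⊆ ⋃ i, C i := by
  obtain ⟨t, -, ht, hKt⟩ := hK.finite_cover_balls hδ
  obtain ⟨n, p, -, rfl⟩ := ht.fin_param
  refine ⟨n, p, disjointed fun i => ball (p i) δ, fun i => ?_, disjoint_disjointed _,
    disjointed_subset _, ?_⟩
  · rw [disjointed_eq_inter_compl]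
    exact measurableSet_ball.inter
      (.iInter fun j => .iInter fun _ => measurableSet_ball.compl)
  · rwa [iUnion_disjointed, ← Set.biUnion_range (f := p) (g := fun x => ball x δ)]

theorem abs_setIntegral_mul_sub_mul_setIntegral_le {X : Type*} [MeasurableSpace X]
    {μ : Measure X} {ρ g : X → ℝ} {s : Set X} {a e : ℝ} (hs : MeasurableSet s)
    (hρ : IntegrableOn ρ s μ) (hρg : IntegrableOn (fun x => ρ x * g x) s μ)
    (hρ₀ : ∀ x ∈ s, 0 ≤ ρ x) (hg : ∀ x ∈ s, |g x - a| ≤ e) :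
    |∫ x in s, ρ x * g x ∂μ - (∫ x in s, ρ x ∂μ) * a| ≤ e * ∫ x in s, ρ x ∂μ := by
  rw [← integral_mul_const, ← integral_sub hρg (hρ.mul_const a), ← integral_const_mul,
    ← Real.norm_eq_abs]
  refine norm_integral_le_of_norm_le (hρ.const_mul e) ((ae_restrict_iff' hs).2 ?_)
  refine .of_forall fun x hx => ?_
  rw [Real.norm_eq_abs, ← mul_sub, abs_mul, abs_of_nonneg (hρ₀ x hx), mul_comm]
  exact mul_le_mul_of_nonneg_right (hg x hx) (hρ₀ x hx)

section CosineSums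

variable {V : Type*} [NormedAddCommGroup V] [InnerProductSpace ℝ V]

variable (V) in
def cosineSums (M : ℝ) : Set (V → ℝ) :=
  {S | ∃ (n : ℕ) (w : Fin n → ℝ) (p : Fin n → V), (∀ i, 0 ≤ w i) ∧ ∑ i, w i ≤ M ∧
    S = fun τ => ∑ i, w i * Real.cos ⟪p i, τ⟫}

lemma abs_le_of_mem_cosineSums {M : ℝ} {S : V → ℝ} (hS : S ∈ cosineSums V M) (τ : V) :
    |S τ| ≤ M := by
  obtain ⟨n, w, p, hw, hM, rfl⟩ := hS
  calc |∑ i, w i * Real.cos ⟪p i, τ⟫| ≤ ∑ i, |w i * Real.cos ⟪p i, τ⟫| :=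
        Finset.abs_sum_le_sum_abs _ _
    _ ≤ ∑ i, w i := Finset.sum_le_sum fun i _ => by
        rw [abs_mul, abs_of_nonneg (hw i)]
        exact mul_le_of_le_one_right (hw i) (Real.abs_cos_le_one _)
    _ ≤ M := hM

lemma abs_cos_inner_sub_cos_inner_le (ω p τ : V) :
    |Real.cos ⟪ω, τ⟫ - Real.cos ⟪p, τ⟫| ≤ ‖ω - p‖ * ‖τ‖ :=
  calc |Real.cos ⟪ω, τ⟫ - Real.cos ⟪p, τ⟫| ≤ |⟪ω, τ⟫ - ⟪p, τ⟫| := Real.abs_cos_sub_cos_le _ _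
    _ = |⟪ω - p, τ⟫| := by rw [inner_sub_left]
    _ ≤ ‖ω - p‖ * ‖τ‖ := abs_real_inner_le_norm _ _

variable [MeasurableSpace V] [OpensMeasurableSpace V] {μ : Measure V} {ρ : V → ℝ}

lemma MeasureTheory.Integrable.mul_cos_inner (hρ : Integrable ρ μ) (τ : V) :
    Integrable (fun ω => ρ ω * Real.cos ⟪ω, τ⟫) μ :=
  hρ.mul_bdd (by fun_prop) (.of_forall fun _ => Real.abs_cos_le_one _)

theorem exists_mem_cosineSums_abs_sub_le [ProperSpace V]
    (hρ : Integrable ρ μ) (hρ₀ : ∀ ω, 0 ≤ ρ ω) {η c : ℝ} (hη : 0 < η) (hc : 0 < c) :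
    ∃ S ∈ cosineSums V (∫ ω, ρ ω ∂μ),
      ∀ τ, |∫ ω, ρ ω * Real.cos ⟪ω, τ⟫ ∂μ - S τ| ≤ η + c * ‖τ‖ := by
  set M := ∫ ω, ρ ω ∂μ
  have hM : 0 ≤ M := integral_nonneg hρ₀
  set δ := c / (M + 1)
  have hδ : 0 < δ := by positivity
  have hδM : δ * M ≤ c := by
    simp only [δ]; rw [div_mul_eq_mul_div, div_le_iff₀ (by positivity)]; nlinarith
  obtain ⟨R, hR⟩ := exists_setIntegral_compl_closedBall_lt hρ 0 hη
  obtain ⟨n, p, C, hCm, hCd, hCp, hRC⟩ :=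
    (isCompact_closedBall (0 : V) R).exists_disjoint_measurable_cover_subset_ball hδ
  have hUm : MeasurableSet (⋃ i, C i) := .iUnion hCm
  set w := fun i => ∫ ω in C i, ρ ω ∂μ
  have hw : ∑ i, w i ≤ M := by
    rw [← integral_iUnion_fintype hCm hCd fun _ => hρ.integrableOn]
    exact setIntegral_le_integral hρ (.of_forall hρ₀)
  refine ⟨fun τ => ∑ i, w i * Real.cos ⟪p i, τ⟫,
    ⟨n, w, p, fun i => setIntegral_nonneg (hCm i) fun ω _ => hρ₀ ω, hw, rfl⟩, fun τ => ?_⟩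
  have hcell : ∀ i, |∫ ω in C i, ρ ω * Real.cos ⟪ω, τ⟫ ∂μ - w i * Real.cos ⟪p i, τ⟫|
      ≤ δ * ‖τ‖ * w i := fun i =>
    abs_setIntegral_mul_sub_mul_setIntegral_le (hCm i) hρ.integrableOn
      (hρ.mul_cos_inner τ).integrableOn (fun ω _ => hρ₀ ω) fun ω hω =>
        (abs_cos_inner_sub_cos_inner_le ω (p i) τ).trans <| by
          gcongr; exact (mem_ball_iff_norm.1 (hCp i hω)).le
  have hcore : |∫ ω in ⋃ i, C i, ρ ω * Real.cos ⟪ω, τ⟫ ∂μ - ∑ i, w i * Real.cos ⟪p i, τ⟫|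
      ≤ c * ‖τ‖ := by
    rw [integral_iUnion_fintype hCm hCd fun _ => (hρ.mul_cos_inner τ).integrableOn,
      ← Finset.sum_sub_distrib]
    calc _ ≤ ∑ i, δ * ‖τ‖ * w i := (Finset.abs_sum_le_sum_abs _ _).trans
          (Finset.sum_le_sum fun i _ => hcell i)
      _ = δ * ‖τ‖ * ∑ i, w i := by rw [Finset.mul_sum]
      _ ≤ δ * ‖τ‖ * M := by gcongr
      _ ≤ c * ‖τ‖ := by rw [mul_right_comm]; gcongr
  have htail : |∫ ω in (⋃ i, C i)ᶜ, ρ ω * Real.cos ⟪ω, τ⟫ ∂μ| ≤ η := by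
    have := abs_setIntegral_mul_sub_mul_setIntegral_le (a := 0) hUm.compl hρ.integrableOn
      (hρ.mul_cos_inner τ).integrableOn (fun ω _ => hρ₀ ω)
      fun ω _ => by rw [sub_zero]; exact Real.abs_cos_le_one _
    rw [mul_zero, sub_zero, one_mul] at this
    refine this.trans (le_of_lt (lt_of_le_of_lt ?_ hR))
    exact setIntegral_mono_set hρ.integrableOn (.of_forall hρ₀)
      (Set.compl_subset_compl.2 hRC).eventuallyLE
  rw [← integral_add_compl hUm (hρ.mul_cos_inner τ)]
  dsimp only
  calc _ ≤ |∫ ω in ⋃ i, C i, ρ ω * Real.cos ⟪ω, τ⟫ ∂μ - ∑ i, w i * Real.cos ⟪p i, τ⟫|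
        + |∫ ω in (⋃ i, C i)ᶜ, ρ ω * Real.cos ⟪ω, τ⟫ ∂μ| := by
        rw [add_sub_right_comm]; exact abs_add_le _ _
    _ ≤ η + c * ‖τ‖ := by linarith

end CosineSums

theorem gaussian_spectral_mixture_universal_general
    (d : ℕ) (ρ : EuclideanSpace ℝ (Fin d) → ℝ)
    (hρ_int : Integrable ρ) (hρ_nonneg : ∀ ω, 0 ≤ ρ ω)
    (k : EuclideanSpace ℝ (Fin d) → ℝ)
    (hk : ∀ τ, k τ = ∫ ω, ρ ω * Real.cos ⟪ω, τ⟫) :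
    ∀ ε > 0, ∃ (Q : ℕ) (v : Fin Q → ℝ) (μ : Fin Q → EuclideanSpace ℝ (Fin d))
      (σ : Fin Q → Fin d → ℝ), (∀ q i, 0 < σ q i) ∧
      ∀ τ : EuclideanSpace ℝ (Fin d),
        |k τ - ∑ q, (v q) ^ 2 *
            Real.exp (-(1 / 2) * ∑ i, (σ q i) ^ 2 * (τ i) ^ 2) *
            Real.cos ⟪τ, μ q⟫| < ε := by
  intro ε hε
  have hk_lim : Tendsto k (Bornology.cobounded _) (𝓝 0) := by
    rw [cobounded_eq_cocompact, funext hk]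
    exact tendsto_integral_mul_cos_inner_cocompact hρ_int
  obtain ⟨σ, hσ, S, ⟨n, w, p, hw, -, rfl⟩, hS⟩ :=
    exists_abs_sub_exp_mul_lt hk_lim (fun _ hS => abs_le_of_mem_cosineSums hS)
      (fun η hη c hc => by
        simpa only [hk] using
          exists_mem_cosineSums_abs_sub_le hρ_int hρ_nonneg hη hc) hε
  refine ⟨n, fun q => √(w q), p, fun _ _ => σ, fun _ _ => hσ, fun τ => ?_⟩
  convert hS τ using 3
  dsimp only
  rw [← Finset.mul_sum, ← EuclideanSpace.real_norm_sq_eq, Finset.mul_sum]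
  refine Finset.sum_congr rfl fun q _ => ?_
  rw [Real.sq_sqrt (hw q), real_inner_comm]
  ring

/-- Universal Basis (Lemma 1): any translation-invariant kernel with nonnegative, symmetric,
integrable spectral density can be uniformly approximated by Gaussian spectral mixture kernels
`k_GM τ = ∑ q, v_q² exp(-(1/2) ∑ i σ_{q,i}² τ_i²) cos ⟪τ, μ_q⟫`. -/
theorem gaussian_spectral_mixture_universal
    (d : ℕ) (ρ : EuclideanSpace ℝ (Fin d) → ℝ)
    (hρ_int : Integrable ρ) (hρ_nonneg : ∀ ω, 0 ≤ ρ ω)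
    (hρ_symm : ∀ ω, ρ (-ω) = ρ ω)
    (k : EuclideanSpace ℝ (Fin d) → ℝ)
    (hk : ∀ τ, k τ = ∫ ω, ρ ω * Real.cos ⟪ω, τ⟫) :
    ∀ ε > 0, ∃ (Q : ℕ) (v : Fin Q → ℝ) (μ : Fin Q → EuclideanSpace ℝ (Fin d))
      (σ : Fin Q → Fin d → ℝ), (∀ q i, 0 < σ q i) ∧
      ∀ τ : EuclideanSpace ℝ (Fin d),
        |k τ - ∑ q, (v q) ^ 2 *
            Real.exp (-(1 / 2) * ∑ i, (σ q i) ^ 2 * (τ i) ^ 2) *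
            Real.cos ⟪τ, μ q⟫| < ε :=
  gaussian_spectral_mixture_universal_general d ρ hρ_int hρ_nonneg k hk
end

section
/- Let Q ∈ ℕ, v_q ∈ ℝ, μ_q ∈ ℝ^d, and σ_{q,1}, …, σ_{q,d} > 0 for q = 1, …, Q. Define k : ℝ^d × ℝ^d → ℝ by k(x, x') = Σ_{q=1}^Q v_q² exp(−(1/2) Σ_{i=1}^d σ_{q,i}² (x_i − x'_i)²) cos⟨x − x', μ_q⟩. Then k is a positive semidefinite kernel: for any points x_1, …, x_n ∈ ℝ^d and coefficients c_1, …, c_n ∈ ℝ, Σ_{i,j} c_i c_j k(x_i, x_j) ≥ 0. -/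
/-!
Expanding the square and `cos (a - b) = cos a cos b + sin a sin b` writes each summand as
`∑ f, f(x) f(x') exp (∑ i σᵢ² xᵢ x'ᵢ)` over `f ∈ {e · cos⟪·, μ⟫, e · sin⟪·, μ⟫}`, where
`e(x) = exp (-(1/2) ∑ i σᵢ² xᵢ²)`. The power series of `exp` turns `exp (∑ i σᵢ² xᵢ x'ᵢ)` into a
nonnegative combination of powers of a finite-dimensional Gram kernel, and each such power is again
a Gram kernel, with features indexed by words in the coordinates.
-/

open scoped RealInnerProductSpace
open Finset

def IsPosSemidefKernel {X : Type*} (k : X → X → ℝ) : Prop :=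
  ∀ (n : ℕ) (x : Fin n → X) (c : Fin n → ℝ), 0 ≤ ∑ i, ∑ j, c i * c j * k (x i) (x j)

namespace IsPosSemidefKernel

variable {X : Type*} {k l : X → X → ℝ}

theorem add (hk : IsPosSemidefKernel k) (hl : IsPosSemidefKernel l) :
    IsPosSemidefKernel fun x y => k x y + l x y := by
  intro n x c
  simp only [mul_add, sum_add_distrib]
  exact add_nonneg (hk n x c) (hl n x c)

theorem sum {ι : Type*} {s : Finset ι} {K : ι → X → X → ℝ}
    (hK : ∀ q ∈ s, IsPosSemidefKernel (K q)) :
    IsPosSemidefKernel fun x y => ∑ q ∈ s, K q x y := by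
  intro n x c
  have hswap : ∑ i, ∑ j, c i * c j * ∑ q ∈ s, K q (x i) (x j)
      = ∑ q ∈ s, ∑ i, ∑ j, c i * c j * K q (x i) (x j) := by
    simp only [mul_sum]
    exact (sum_congr rfl fun _ _ => Finset.sum_comm).trans Finset.sum_comm
  rw [hswap]
  exact sum_nonneg fun q hq => hK q hq n x c

theorem const_mul (hk : IsPosSemidefKernel k) {a : ℝ} (ha : 0 ≤ a) :
    IsPosSemidefKernel fun x y => a * k x y := by
  intro n x c
  have hscale : ∑ i, ∑ j, c i * c j * (a * k (x i) (x j))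
      = a * ∑ i, ∑ j, c i * c j * k (x i) (x j) := by
    simp only [mul_sum]
    exact sum_congr rfl fun _ _ => sum_congr rfl fun _ _ => by ring
  beta_reduce
  rw [hscale]
  exact mul_nonneg ha (hk n x c)

theorem rescale (hk : IsPosSemidefKernel k) (f : X → ℝ) :
    IsPosSemidefKernel fun x y => f x * f y * k x y := by
  intro n x c
  convert hk n x (fun i => c i * f (x i)) using 1
  exact sum_congr rfl fun _ _ => sum_congr rfl fun _ _ => by ring

theorem mul_cos_sub (hk : IsPosSemidefKernel k) (g : X → ℝ) :
    IsPosSemidefKernel fun x y => k x y * Real.cos (g x - g y) := by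
  convert (hk.rescale fun x => Real.cos (g x)).add (hk.rescale fun x => Real.sin (g x)) using 1
  funext x y
  rw [Real.cos_sub]
  ring

theorem of_hasSum {ι : Type*} {K : ι → X → X → ℝ} (hK : ∀ m, IsPosSemidefKernel (K m))
    (hsum : ∀ x y, HasSum (fun m => K m x y) (k x y)) : IsPosSemidefKernel k := by
  intro n x c
  have hquad : HasSum (fun m => ∑ i, ∑ j, c i * c j * K m (x i) (x j))
      (∑ i, ∑ j, c i * c j * k (x i) (x j)) :=
    hasSum_sum fun i _ => hasSum_sum fun j _ => (hsum _ _).mul_left _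
  exact hquad.nonneg fun m => hK m n x c

end IsPosSemidefKernel

section Gram

variable {X ι : Type*} [Fintype ι]

theorem isPosSemidefKernel_gram (φ : X → ι → ℝ) :
    IsPosSemidefKernel fun x y => ∑ t, φ x t * φ y t := by
  intro n x c
  have hsq : ∑ t, (∑ i, c i * φ (x i) t) ^ 2
      = ∑ i, ∑ j, c i * c j * ∑ t, φ (x i) t * φ (x j) t := by
    simp_rw [sq, sum_mul_sum]
    rw [Finset.sum_comm]
    refine sum_congr rfl fun _ _ => ?_
    rw [Finset.sum_comm]
    simp only [mul_sum]
    exact sum_congr rfl fun _ _ => sum_congr rfl fun _ _ => by ring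
  beta_reduce
  rw [← hsq]
  positivity

theorem gram_pow_eq_sum (φ : X → ι → ℝ) (x y : X) (m : ℕ) :
    (∑ t, φ x t * φ y t) ^ m = ∑ p : Fin m → ι, (∏ r, φ x (p r)) * ∏ r, φ y (p r) := by
  simp only [Fintype.sum_pow, prod_mul_distrib]

theorem isPosSemidefKernel_gram_pow (φ : X → ι → ℝ) (m : ℕ) :
    IsPosSemidefKernel fun x y => (∑ t, φ x t * φ y t) ^ m := by
  simpa only [gram_pow_eq_sum] using isPosSemidefKernel_gram fun x (p : Fin m → ι) => ∏ r, φ x (p r)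

theorem isPosSemidefKernel_exp_gram (φ : X → ι → ℝ) :
    IsPosSemidefKernel fun x y => Real.exp (∑ t, φ x t * φ y t) :=
  IsPosSemidefKernel.of_hasSum
    (fun m => (isPosSemidefKernel_gram_pow φ m).const_mul
      (inv_nonneg.2 (Nat.cast_nonneg m.factorial)))
    fun x y => by
      simpa only [Real.exp_eq_exp_ℝ, div_eq_inv_mul] using
        NormedSpace.expSeries_div_hasSum_exp (∑ t, φ x t * φ y t)

end Gram

theorem isPosSemidefKernel_gaussian {ι : Type*} [Fintype ι] (σ : ι → ℝ) :
    IsPosSemidefKernel fun x y : EuclideanSpace ℝ ι =>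
      Real.exp (-(1 / 2) * ∑ i, σ i ^ 2 * (x i - y i) ^ 2) := by
  convert (isPosSemidefKernel_exp_gram fun (x : EuclideanSpace ℝ ι) i => σ i * x i).rescale
    (fun x => Real.exp (-(1 / 2) * ∑ i, σ i ^ 2 * x i ^ 2)) using 1
  funext x y
  rw [← Real.exp_add, ← Real.exp_add]
  congr 1
  simp only [mul_sum, ← sum_add_distrib]
  exact sum_congr rfl fun _ _ => by ring

theorem gaussian_spectral_mixture_posSemidef_general
    (d Q : ℕ) (v : Fin Q → ℝ) (μ : Fin Q → EuclideanSpace ℝ (Fin d))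
    (σ : Fin Q → Fin d → ℝ)
    (k : EuclideanSpace ℝ (Fin d) → EuclideanSpace ℝ (Fin d) → ℝ)
    (hk : ∀ x x', k x x' = ∑ q, (v q) ^ 2 *
        Real.exp (-(1/2) * ∑ i, (σ q i) ^ 2 * (x i - x' i) ^ 2) *
        Real.cos ⟪x - x', μ q⟫) :
    ∀ (n : ℕ) (x : Fin n → EuclideanSpace ℝ (Fin d)) (c : Fin n → ℝ),
      0 ≤ ∑ i, ∑ j, c i * c j * k (x i) (x j) := by
  have hk_fun : k = fun x x' => ∑ q, v q ^ 2 *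
      (Real.exp (-(1 / 2) * ∑ i, σ q i ^ 2 * (x i - x' i) ^ 2) *
        Real.cos (⟪x, μ q⟫ - ⟪x', μ q⟫)) := by
    funext x x'
    simp only [hk, inner_sub_left, mul_assoc]
  have hpsd : IsPosSemidefKernel k := by
    rw [hk_fun]
    exact IsPosSemidefKernel.sum fun q _ =>
      ((isPosSemidefKernel_gaussian (σ q)).mul_cos_sub fun x => ⟪x, μ q⟫).const_mul
        (sq_nonneg (v q))
  exact hpsd

/-- The Gaussian spectral mixture kernel
`k(x,x') = ∑ q v_q² exp(-(1/2) ∑ i σ_{q,i}² (x_i - x'_i)²) cos⟪x - x', μ_q⟫`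
is positive semidefinite. -/
theorem gaussian_spectral_mixture_posSemidef
    (d Q : ℕ) (v : Fin Q → ℝ) (μ : Fin Q → EuclideanSpace ℝ (Fin d))
    (σ : Fin Q → Fin d → ℝ) (hσ : ∀ q i, 0 < σ q i)
    (k : EuclideanSpace ℝ (Fin d) → EuclideanSpace ℝ (Fin d) → ℝ)
    (hk : ∀ x x', k x x' = ∑ q, (v q) ^ 2 *
        Real.exp (-(1/2) * ∑ i, (σ q i) ^ 2 * (x i - x' i) ^ 2) *
        Real.cos ⟪x - x', μ q⟫) :
    ∀ (n : ℕ) (x : Fin n → EuclideanSpace ℝ (Fin d)) (c : Fin n → ℝ),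
      0 ≤ ∑ i, ∑ j, c i * c j * k (x i) (x j) :=
  gaussian_spectral_mixture_posSemidef_general d Q v μ σ k hk
end
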